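/- Let k ≥ 3, ℓ ≥ 1, n ≥ 1. Let M = (α_1 ⋯ α_k) be a 2^ℓ × k complex matrix whose columns α_σ, α_τ (σ ≠ τ) are linearly independent, let X_{σ,τ} be a 2 × k matrix with (α_σ α_τ)·X_{σ,τ} = M, and let X'_{σ,τ} be an invertible k × k matrix with X_{σ,τ}·X'_{σ,τ} = [[1,0,0,…,0],[0,1,0,…,0]]. Suppose R = R̲ M^{⊗n} for a tensor R̲ of arity n on domain size 2^ℓ, and set R' = R (X'_{σ,τ})^{⊗n}. Then R' = R̲ N^{⊗n} where N is the 2^ℓ × k matrix whose first column is α_σ, second column is α_τ, and all remaining columns are zero; in particular, the restriction of R' to {0,1} (the first two domain values) equals R^{(σ,τ)}. -/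

import Mathlib

/-! Transforms compose: `R' = R̲ (M X')^{⊗n}`, and `M X' = (α_σ α_τ) X X'` is `(α_σ α_τ)` padded
with zero columns. Restricting a transform to `{σ, τ}` is transforming by the columns `σ, τ`,
which for the padded matrix at `{0, 1}` are again `α_σ, α_τ`. -/

open Matrix BigOperators

/-- A tensor of arity `n` on domain size `k` is degenerate if it is a tensor
product of vectors. -/
def Degenerate {n k : ℕ} (R : (Fin n → Fin k) → ℂ) : Prop :=
  ∃ v : Fin n → (Fin k → ℂ), ∀ i, R i = ∏ t, v t (i t)

/-- The recognizer transform `R̲ M^{⊗n}` of a tensor `R̲` on domain `D`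
under a matrix `M` with rows indexed by `D` and columns indexed by `E`. -/
noncomputable def rtrans {n : ℕ} {D E : Type*} [Fintype D] (M : Matrix D E ℂ)
    (R : (Fin n → D) → ℂ) : (Fin n → E) → ℂ :=
  fun i => ∑ j : Fin n → D, R j * ∏ t, M (j t) (i t)

/-- The generator transform `M^{⊗n} G` of a column tensor `G` on domain `E`
under a matrix `M` with rows indexed by `D` and columns indexed by `E`. -/
noncomputable def gtrans {n : ℕ} {D E : Type*} [Fintype E] (M : Matrix D E ℂ)
    (G : (Fin n → E) → ℂ) : (Fin n → D) → ℂ :=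
  fun s => ∑ i : Fin n → E, (∏ t, M (s t) (i t)) * G i

/-- The restriction `R^{(σ,τ)}` of a tensor on domain size `k` to `{σ, τ}`. -/
def restrict {n k : ℕ} (R : (Fin n → Fin k) → ℂ) (σ τ : Fin k) :
    (Fin n → Fin 2) → ℂ :=
  fun j => R fun t => if j t = 0 then σ else τ

/-- The submatrix `(α_σ α_τ)` formed by the columns `σ` and `τ` of `M`. -/
def subM {D : Type*} {k : ℕ} (M : Matrix D (Fin k) ℂ) (σ τ : Fin k) :
    Matrix D (Fin 2) ℂ :=
  Matrix.of fun i c => if c = 0 then M i σ else M i τ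

/-- The `t`-th signature matrix `A_R(t)` of a tensor on domain size 2. -/
def sigMatrix {n : ℕ} (R : (Fin n → Fin 2) → ℂ) (t : Fin n) :
    Matrix (Fin 2) ({s : Fin n // s ≠ t} → Fin 2) ℂ :=
  Matrix.of fun b i => R fun s => if h : s = t then b else i ⟨s, h⟩

/-- The two-column matrix `A_{σ,τ}(R)`, with rows indexed by a position `t`
and an assignment of domain values to the remaining positions. -/
def Amat {n k : ℕ} (R : (Fin n → Fin k) → ℂ) (σ τ : Fin k) :
    Matrix (Σ t : Fin n, ({s : Fin n // s ≠ t} → Fin k)) (Fin 2) ℂ :=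
  Matrix.of fun p c =>
    R fun s => if h : s = p.1 then (if c = 0 then σ else τ) else p.2 ⟨s, h⟩

/-- The column vector `b_w(R)`. -/
def bvec {n k : ℕ} (R : (Fin n → Fin k) → ℂ) (w : Fin k) :
    (Σ t : Fin n, ({s : Fin n // s ≠ t} → Fin k)) → ℂ :=
  fun p => R fun s => if h : s = p.1 then w else p.2 ⟨s, h⟩

/-- The `2 × k` matrix `[[1,0,0,…,0],[0,1,0,…,0]]`. -/
def projMat (k : ℕ) : Matrix (Fin 2) (Fin k) ℂ :=
  Matrix.of fun r c => if (r : ℕ) = (c : ℕ) then 1 else 0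

lemma rtrans_rtrans {n : ℕ} {D E F : Type*} [Fintype D] [Fintype E]
    (A : Matrix D E ℂ) (B : Matrix E F ℂ) (R : (Fin n → D) → ℂ) :
    rtrans B (rtrans A R) = rtrans (A * B) R := by
  funext i
  simp only [rtrans, Matrix.mul_apply, Fintype.prod_sum, Finset.sum_mul, Finset.mul_sum, mul_assoc,
    ← Finset.prod_mul_distrib]
  exact Finset.sum_comm

lemma restrict_rtrans {n k : ℕ} {D : Type*} [Fintype D] (A : Matrix D (Fin k) ℂ)
    (R : (Fin n → D) → ℂ) (σ τ : Fin k) :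
    restrict (rtrans A R) σ τ = rtrans (subM A σ τ) R := by
  funext j
  simp only [restrict, rtrans, subM, Matrix.of_apply, apply_ite]

lemma subM_mul_projMat {D : Type*} {k : ℕ} (hk : 2 ≤ k) (A : Matrix D (Fin k) ℂ)
    (σ τ : Fin k) :
    subM A σ τ * projMat k = Matrix.of fun i c =>
      if c = (⟨0, by omega⟩ : Fin k) then A i σ
      else if c = (⟨1, by omega⟩ : Fin k) then A i τ else 0 := by
  ext i ⟨_ | _ | c, hc⟩ <;> simp [Matrix.mul_apply, Fin.sum_univ_two, subM, projMat]

lemma subM_mul_projMat_zero_one {D : Type*} {k : ℕ} (hk : 2 ≤ k) (B : Matrix D (Fin 2) ℂ) :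
    subM (B * projMat k) ⟨0, by omega⟩ ⟨1, by omega⟩ = B := by
  ext i c
  fin_cases c <;> simp [Matrix.mul_apply, Fin.sum_univ_two, subM, projMat]

/-- With `R' = R (X'_{σ,τ})^{⊗n}`, we have
`R' = R̲ (α_σ α_τ 0 ⋯ 0)^{⊗n}`; in particular the restriction of `R'` to the
first two domain values equals `R^{(σ,τ)}`. -/
theorem transformed_recognizer {k ℓ n : ℕ} (hk : 3 ≤ k)
    (M : Matrix (Fin (2 ^ ℓ)) (Fin k) ℂ) (σ τ : Fin k)
    (X : Matrix (Fin 2) (Fin k) ℂ) (hX : subM M σ τ * X = M)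
    (X' : Matrix (Fin k) (Fin k) ℂ)
    (hXX' : X * X' = projMat k)
    (R : (Fin n → Fin k) → ℂ) (R0 : (Fin n → Fin (2 ^ ℓ)) → ℂ)
    (hR : R = rtrans M R0) (R' : (Fin n → Fin k) → ℂ)
    (hR' : R' = rtrans X' R) :
    R' = rtrans (Matrix.of fun i c =>
        if c = (⟨0, by omega⟩ : Fin k) then M i σ
        else if c = (⟨1, by omega⟩ : Fin k) then M i τ else 0) R0 ∧
    restrict R' ⟨0, by omega⟩ ⟨1, by omega⟩ = restrict R σ τ := by
  have hR'_eq : R' = rtrans (subM M σ τ * projMat k) R0 := by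
    rw [hR', hR, rtrans_rtrans, ← hXX', ← Matrix.mul_assoc, hX]
  refine ⟨by rw [hR'_eq, subM_mul_projMat (by omega)], ?_⟩
  rw [hR'_eq, hR, restrict_rtrans, restrict_rtrans, subM_mul_projMat_zero_one (by omega)]
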